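/- Let B = ℂ[x,y,z,t] with the relation x + x²y + z² + t³ = 0 (the coordinate ring of the Russell cubic threefold), and D the locally nilpotent derivation D = x² ∂/∂z − 2z ∂/∂y with kernel A = ℂ[x,t]. Then the plinth ideal pl(D) = A ∩ DB equals x²A, and the first degree module F₁ = ker D² equals A + Az. -/
import Mathlib


open MvPolynomial

/-- The defining ideal of the Russell cubic threefold `x + x²y + z² + t³ = 0`
(variables `x = X 0`, `y = X 1`, `z = X 2`, `t = X 3`). -/
noncomputable def russellIdeal : Ideal (MvPolynomial (Fin 4) ℂ) :=
  Ideal.span {X 0 + (X 0) ^ 2 * X 1 + (X 2) ^ 2 + (X 3) ^ 3}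

/-- The coordinate ring of the Russell cubic threefold. -/
abbrev RussellRing : Type := MvPolynomial (Fin 4) ℂ ⧸ russellIdeal

noncomputable section RCAux

/-- renaming: downstairs variables 0 = y, 1 = x, 2 = t -/
def rcι : Fin 3 → Fin 4 := ![1, 0, 3]

def rcU : MvPolynomial (Fin 3) ℂ := X 1 + X 1 ^ 2 * X 0 + X 2 ^ 3

def rcF : MvPolynomial (Fin 4) ℂ := X 0 + (X 0) ^ 2 * X 1 + (X 2) ^ 2 + (X 3) ^ 3

def rcΦ : MvPolynomial (Fin 3) ℂ →+* RussellRing :=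
  (Ideal.Quotient.mk russellIdeal).comp (rename rcι).toRingHom

def rcz : RussellRing := Ideal.Quotient.mk russellIdeal (X 2)

def rcE : MvPolynomial (Fin 4) ℂ ≃ₐ[ℂ] Polynomial (MvPolynomial (Fin 3) ℂ) :=
  (renameEquiv ℂ (Equiv.swap 0 2)).trans (finSuccEquiv ℂ 3)

lemma rcE_X0 : rcE (X 0) = Polynomial.C (X 1) := by
  simp [rcE, Equiv.swap_apply_of_ne_of_ne]
  rw [show (2 : Fin 4) = Fin.succ 1 by rfl, finSuccEquiv_X_succ]

lemma rcE_X1 : rcE (X 1) = Polynomial.C (X 0) := by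
  simp [rcE, Equiv.swap_apply_of_ne_of_ne]
  rw [show (1 : Fin 4) = Fin.succ 0 by rfl, finSuccEquiv_X_succ]

lemma rcE_X2 : rcE (X 2) = Polynomial.X := by
  simp [rcE, Equiv.swap_apply_of_ne_of_ne]
  exact finSuccEquiv_X_zero

lemma rcE_X3 : rcE (X 3) = Polynomial.C (X 2) := by
  simp [rcE, Equiv.swap_apply_of_ne_of_ne]
  rw [show (3 : Fin 4) = Fin.succ 2 by rfl, finSuccEquiv_X_succ]

lemma rcE_rename (p : MvPolynomial (Fin 3) ℂ) : rcE (rename rcι p) = Polynomial.C p := by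
  induction p using MvPolynomial.induction_on with
  | C a =>
      simp only [rename_C, rcE, AlgEquiv.trans_apply, renameEquiv_apply, rename_C]
      simp [finSuccEquiv_apply]
  | add p q hp hq => simp [map_add, hp, hq]
  | mul_X p i hp =>
      rw [map_mul, rename_X, map_mul, hp]
      fin_cases i <;>
        simp [rcι, rcE_X0, rcE_X1, rcE_X3, Polynomial.C_mul]

set_option maxRecDepth 4000 in
lemma rcE_F : rcE rcF = Polynomial.X ^ 2 + Polynomial.C rcU := by
  have : rcF = X 0 + (X 0) ^ 2 * X 1 + (X 2) ^ 2 + (X 3) ^ 3 := rfl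
  rw [this, map_add, map_add, map_add, map_mul, map_pow, map_pow, map_pow,
    rcE_X0, rcE_X1, rcE_X2, rcE_X3, rcU]
  simp only [← Polynomial.C_pow, ← Polynomial.C_mul, ← Polynomial.C_add]
  rw [add_right_comm, ← Polynomial.C_add, add_comm]

lemma rc_mk_F : Ideal.Quotient.mk russellIdeal rcF = 0 :=
  Ideal.Quotient.eq_zero_iff_mem.mpr (Ideal.subset_span rfl)

lemma rcΦ_X0 : rcΦ (X 0) = Ideal.Quotient.mk russellIdeal (X 1) := by
  simp [rcΦ, rcι]

lemma rcΦ_X1 : rcΦ (X 1) = Ideal.Quotient.mk russellIdeal (X 0) := by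
  simp [rcΦ, rcι]

lemma rcΦ_X2 : rcΦ (X 2) = Ideal.Quotient.mk russellIdeal (X 3) := by
  simp [rcΦ, rcι]

lemma rc_rename_U : rename rcι rcU = X 0 + (X 0) ^ 2 * X 1 + (X 3) ^ 3 := by
  simp [rcU, rcι]

lemma rc_zsq : rcz ^ 2 = rcΦ (-rcU) := by
  have : (X 2 : MvPolynomial (Fin 4) ℂ) ^ 2 - (-(rename rcι rcU)) = rcF := by
    rw [rc_rename_U, rcF]; ring
  have hmem : (X 2 : MvPolynomial (Fin 4) ℂ) ^ 2 - (-(rename rcι rcU)) ∈ russellIdeal := by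
    rw [this]; exact Ideal.subset_span rfl
  have h2 := Ideal.Quotient.eq.mpr hmem
  rw [map_pow] at h2
  show Ideal.Quotient.mk russellIdeal (X 2) ^ 2 = rcΦ (-rcU)
  rw [h2]
  simp [rcΦ]

/-- Uniqueness of the representation `b = Φ p + Φ q z`. -/
lemma rc_uniq {p q : MvPolynomial (Fin 3) ℂ} (h : rcΦ p + rcΦ q * rcz = 0) :
    p = 0 ∧ q = 0 := by
  have hmem : rename rcι p + rename rcι q * X 2 ∈ russellIdeal := by
    rw [← Ideal.Quotient.eq_zero_iff_mem, map_add, map_mul]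
    exact h
  rw [russellIdeal, Ideal.mem_span_singleton] at hmem
  have hdvd : (Polynomial.X ^ 2 + Polynomial.C rcU) ∣
      (Polynomial.C p + Polynomial.C q * Polynomial.X) := by
    have := map_dvd (rcE : MvPolynomial (Fin 4) ℂ →+* Polynomial (MvPolynomial (Fin 3) ℂ)) hmem
    rwa [show ((rcE : MvPolynomial (Fin 4) ℂ →+* _) (X 0 + (X 0) ^ 2 * X 1 + (X 2) ^ 2 + (X 3) ^ 3)) = rcE rcF from rfl,
      rcE_F, show ∀ g, (rcE : MvPolynomial (Fin 4) ℂ →+* _) g = rcE g from fun _ => rfl,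
      map_add, map_mul, rcE_rename, rcE_rename, rcE_X2] at this
  have h0 : Polynomial.C p + Polynomial.C q * Polynomial.X = 0 := by
    refine Polynomial.eq_zero_of_dvd_of_degree_lt hdvd ?_
    have h1 : (Polynomial.C p + Polynomial.C q * Polynomial.X).degree ≤ 1 := by
      refine le_trans (Polynomial.degree_add_le _ _) ?_
      refine max_le (le_trans Polynomial.degree_C_le (by norm_num)) ?_
      exact Polynomial.degree_C_mul_X_le q
    have h2 : (Polynomial.X ^ 2 + Polynomial.C rcU).degree = 2 :=
      Polynomial.degree_X_pow_add_C (by norm_num) rcU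
    rw [h2]
    exact lt_of_le_of_lt h1 (by norm_num)
  constructor
  · have := congrArg (fun P => Polynomial.coeff P 0) h0
    simpa using this
  · have := congrArg (fun P => Polynomial.coeff P 1) h0
    simpa using this

/-- Every element of the Russell ring is of the form `Φ p + Φ q z`. -/
lemma rc_repr (b : RussellRing) : ∃ p q, b = rcΦ p + rcΦ q * rcz := by
  obtain ⟨g, rfl⟩ := Ideal.Quotient.mk_surjective b
  induction g using MvPolynomial.induction_on with
  | C a => exact ⟨C a, 0, by simp [rcΦ]⟩
  | add g g' hg hg' =>
      obtain ⟨p, q, hpq⟩ := hg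
      obtain ⟨p', q', hpq'⟩ := hg'
      exact ⟨p + p', q + q', by rw [map_add, hpq, hpq', map_add, map_add]; ring⟩
  | mul_X g i hg =>
      obtain ⟨p, q, hpq⟩ := hg
      rw [map_mul, hpq]
      fin_cases i
      · exact ⟨p * X 1, q * X 1, by
          show (rcΦ p + rcΦ q * rcz) * Ideal.Quotient.mk russellIdeal (X 0)
            = rcΦ (p * X 1) + rcΦ (q * X 1) * rcz
          rw [map_mul, map_mul, ← rcΦ_X1]; ring⟩
      · exact ⟨p * X 0, q * X 0, by
          show (rcΦ p + rcΦ q * rcz) * Ideal.Quotient.mk russellIdeal (X 1)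
            = rcΦ (p * X 0) + rcΦ (q * X 0) * rcz
          rw [map_mul, map_mul, ← rcΦ_X0]; ring⟩
      · refine ⟨-rcU * q, p, ?_⟩
        show (rcΦ p + rcΦ q * rcz) * Ideal.Quotient.mk russellIdeal (X 2)
          = rcΦ (-rcU * q) + rcΦ p * rcz
        have hzz : Ideal.Quotient.mk russellIdeal (X 2) = rcz := rfl
        rw [hzz, map_mul]
        have hsq : rcΦ (-rcU) = rcz ^ 2 := rc_zsq.symm
        calc (rcΦ p + rcΦ q * rcz) * rcz = rcΦ q * rcz ^ 2 + rcΦ p * rcz := by ring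
        _ = rcΦ (-rcU) * rcΦ q + rcΦ p * rcz := by rw [hsq]; ring
      · exact ⟨p * X 2, q * X 2, by
          show (rcΦ p + rcΦ q * rcz) * Ideal.Quotient.mk russellIdeal (X 3)
            = rcΦ (p * X 2) + rcΦ (q * X 2) * rcz
          rw [map_mul, map_mul, ← rcΦ_X2]; ring⟩

lemma rc_e2_C (a : ℂ) : finSuccEquiv ℂ 2 (C a) = Polynomial.C (C a) := by
  simp [finSuccEquiv_apply]

lemma rc_e2_pderiv (p : MvPolynomial (Fin 3) ℂ) :
    finSuccEquiv ℂ 2 (pderiv 0 p) = Polynomial.derivative (finSuccEquiv ℂ 2 p) := by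
  induction p using MvPolynomial.induction_on with
  | C a => simp [rc_e2_C]
  | add p q hp hq => simp [map_add, hp, hq]
  | mul_X p i hp =>
      rw [pderiv_mul, map_add, map_mul, map_mul, hp, map_mul]
      cases i using Fin.cases with
      | zero =>
          rw [pderiv_X_self, map_one, finSuccEquiv_X_zero]
          simp [Polynomial.derivative_mul]
      | succ j =>
          rw [pderiv_X_of_ne (Fin.succ_ne_zero j), finSuccEquiv_X_succ]
          simp [Polynomial.derivative_mul]

lemma rc_keyPoly {S : Type*} [CommRing S] [IsDomain S] [CharZero S] (a b : S) (hb : b ≠ 0)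
    (c : ℕ) (hc : c ≠ 0) (r : Polynomial S)
    (h : Polynomial.C ((c : S) * b) * r
        + 2 * (Polynomial.C a + Polynomial.C b * Polynomial.X) * Polynomial.derivative r = 0) :
    r = 0 := by
  by_contra hr
  have coeff2 : ∀ (q : Polynomial S) (n : ℕ), (2 * q).coeff n = 2 * q.coeff n := by
    intro q n
    rw [two_mul, Polynomial.coeff_add, two_mul]
  have h' : Polynomial.C ((c : S) * b) * r + 2 * (Polynomial.C a * Polynomial.derivative r)
      + 2 * (Polynomial.C b * (Polynomial.X * Polynomial.derivative r)) = 0 := by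
    linear_combination h
  rcases Nat.eq_zero_or_pos r.natDegree with h0 | hpos
  · have hd : Polynomial.derivative r = 0 := by
      rw [Polynomial.eq_C_of_natDegree_eq_zero h0, Polynomial.derivative_C]
    rw [hd] at h'
    have h'' : Polynomial.C ((c : S) * b) * r = 0 := by linear_combination h'
    rcases mul_eq_zero.mp h'' with h3 | h3
    · rw [Polynomial.C_eq_zero, mul_eq_zero] at h3
      rcases h3 with h3 | h3
      · exact hc (Nat.cast_eq_zero.mp h3)
      · exact hb h3
    · exact hr h3
  · obtain ⟨m, hm⟩ : ∃ m, r.natDegree = m + 1 := ⟨r.natDegree - 1, by omega⟩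
    have hco := congrArg (fun P => Polynomial.coeff P r.natDegree) h'
    simp only [Polynomial.coeff_add, coeff2, Polynomial.coeff_C_mul, Polynomial.coeff_zero] at hco
    rw [hm, Polynomial.coeff_X_mul, Polynomial.coeff_derivative, Polynomial.coeff_derivative,
      Polynomial.coeff_eq_zero_of_natDegree_lt (show r.natDegree < m + 1 + 1 by omega)] at hco
    have hlc : r.coeff r.natDegree ≠ 0 := by
      rw [← Polynomial.leadingCoeff]
      exact Polynomial.leadingCoeff_ne_zero.mpr hr
    rw [hm] at hlc
    have hfin : b * r.coeff (m + 1) * ((c : S) + 2 * ((m : S) + 1)) = 0 := by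
      linear_combination hco
    rcases mul_eq_zero.mp hfin with h'' | h''
    · rcases mul_eq_zero.mp h'' with h'' | h''
      · exact hb h''
      · exact hlc h''
    · have : ((c + 2 * (m + 1) : ℕ) : S) = 0 := by push_cast; linear_combination h''
      exact absurd (Nat.cast_eq_zero.mp this) (by omega)

/-- The key kernel lemma: `c x² r + 2 u ∂r = 0` forces `r = 0`. -/
lemma rcL (c : ℕ) (hc : c ≠ 0) (r : MvPolynomial (Fin 3) ℂ)
    (h : (c : MvPolynomial (Fin 3) ℂ) * X 1 ^ 2 * r + 2 * rcU * pderiv 0 r = 0) : r = 0 := by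
  have h2 := congrArg (finSuccEquiv ℂ 2) h
  rw [map_add, map_mul, map_mul, map_mul, map_mul, map_natCast, map_pow, map_zero,
    rc_e2_pderiv, map_ofNat, rcU, map_add, map_add, map_mul, map_pow, map_pow,
    finSuccEquiv_X_zero,
    show (X 1 : MvPolynomial (Fin 3) ℂ) = X (Fin.succ 0) from rfl, finSuccEquiv_X_succ,
    show (X 2 : MvPolynomial (Fin 3) ℂ) = X (Fin.succ 1) from rfl, finSuccEquiv_X_succ] at h2
  apply (finSuccEquiv ℂ 2).injective
  rw [map_zero]
  apply rc_keyPoly (X 0 + X 1 ^ 3) (X 0 ^ 2) (pow_ne_zero _ (X_ne_zero 0)) c hc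
  rw [Polynomial.C_mul, map_natCast Polynomial.C, Polynomial.C_pow, map_add, Polynomial.C_pow]
  linear_combination h2

lemma rc_pderiv_U : pderiv 0 rcU = X 1 ^ 2 := by
  have h1 : pderiv 0 (X 1 : MvPolynomial (Fin 3) ℂ) = 0 := pderiv_X_of_ne (by decide)
  have h2 : pderiv 0 (X 2 : MvPolynomial (Fin 3) ℂ) = 0 := pderiv_X_of_ne (by decide)
  rw [rcU, map_add, map_add, pderiv_mul, pderiv_pow, pderiv_pow, h1, h2, pderiv_X_self]
  ring

end RCAux

set_option maxHeartbeats 2000000 in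
/-- Let `B = ℂ[x,y,z,t]` with `x + x²y + z² + t³ = 0` be the coordinate ring of the
Russell cubic, and `D` the locally nilpotent derivation `D = x² ∂_z − 2z ∂_y` with
kernel `A = ℂ[x,t]`. Then the plinth ideal `pl(D) = A ∩ DB` equals `x²A`, and the
first degree module `F₁ = ker D²` equals `A + Az`. -/
theorem russell_cubic_plinth (x y z t : RussellRing)
    (hx : x = Ideal.Quotient.mk russellIdeal (X 0))
    (hy : y = Ideal.Quotient.mk russellIdeal (X 1))
    (hz : z = Ideal.Quotient.mk russellIdeal (X 2))
    (ht : t = Ideal.Quotient.mk russellIdeal (X 3))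
    (D : Derivation ℂ RussellRing RussellRing)
    (hDx : D x = 0) (hDt : D t = 0) (hDz : D z = x ^ 2) (hDy : D y = -(2 * z))
    (hln : ∀ b : RussellRing, ∃ n : ℕ, (D.toLinearMap ^ n) b = 0)
    (A : Subalgebra ℂ RussellRing) (hA : A = Algebra.adjoin ℂ {x, t})
    (hker : ∀ b : RussellRing, D b = 0 ↔ b ∈ A) :
    ({w : RussellRing | D w = 0 ∧ ∃ b, D b = w} = {w | ∃ a ∈ A, w = x ^ 2 * a}) ∧
    (∀ b : RussellRing, D (D b) = 0 ↔ ∃ a0 ∈ A, ∃ a1 ∈ A, b = a0 + a1 * z) := by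
  -- identifications
  have hxΦ : x = rcΦ (X 1) := by rw [hx, rcΦ_X1]
  have hyΦ : y = rcΦ (X 0) := by rw [hy, rcΦ_X0]
  have htΦ : t = rcΦ (X 2) := by rw [ht, rcΦ_X2]
  have hzΦ : z = rcz := hz
  have hxA : x ∈ A := by
    rw [hA]; exact Algebra.subset_adjoin (Set.mem_insert _ _)
  -- derivation on Φ-images
  have hDXi : ∀ i : Fin 3, D (rcΦ (X i)) = rcΦ (pderiv 0 (X i)) * (-(2 * rcz)) := by
    intro i
    fin_cases i
    · show D (rcΦ (X 0)) = rcΦ (pderiv 0 (X 0)) * (-(2 * rcz))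
      rw [← hyΦ, hDy, pderiv_X_self, map_one, one_mul, hzΦ]
    · show D (rcΦ (X 1)) = rcΦ (pderiv 0 (X 1)) * (-(2 * rcz))
      rw [← hxΦ, hDx, pderiv_X_of_ne (by decide), map_zero, zero_mul]
    · show D (rcΦ (X 2)) = rcΦ (pderiv 0 (X 2)) * (-(2 * rcz))
      rw [← htΦ, hDt, pderiv_X_of_ne (by decide), map_zero, zero_mul]
  have hDΦ : ∀ p, D (rcΦ p) = rcΦ (pderiv 0 p) * (-(2 * rcz)) := by
    intro p
    induction p using MvPolynomial.induction_on with
    | C a =>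
        have hCa : rcΦ (C a) = algebraMap ℂ RussellRing a := by
          rw [← Ideal.Quotient.mk_algebraMap, MvPolynomial.algebraMap_eq]
          simp [rcΦ]
        rw [hCa, Derivation.map_algebraMap, pderiv_C, map_zero, zero_mul]
    | add p q hp hq => rw [map_add, map_add, map_add, map_add, hp, hq]; ring
    | mul_X p i hp =>
        rw [map_mul, D.leibniz, hp, hDXi, pderiv_mul, map_add, map_mul, map_mul]
        simp only [smul_eq_mul]
        ring
  have hDzval : D rcz = rcΦ (X 1) ^ 2 := by rw [← hzΦ, hDz, hxΦ]
  -- the fundamental formula for D on a representation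
  have hDform : ∀ p q, D (rcΦ p + rcΦ q * rcz) =
      rcΦ (X 1 ^ 2 * q + 2 * rcU * pderiv 0 q) + rcΦ (-(2 * pderiv 0 p)) * rcz := by
    intro p q
    rw [map_add, D.leibniz, hDΦ, hDΦ, hDzval]
    have hz2 : rcz * rcz = -rcΦ rcU := by rw [← pow_two, rc_zsq, map_neg]
    simp only [smul_eq_mul, map_add, map_mul, map_neg, map_pow, map_ofNat]
    linear_combination (-(2 : RussellRing) * rcΦ (pderiv 0 q)) * hz2
  -- kernel characterization
  have hker0 : ∀ p q, D (rcΦ p + rcΦ q * rcz) = 0 → pderiv 0 p = 0 ∧ q = 0 := by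
    intro p q h
    rw [hDform] at h
    obtain ⟨h1, h2⟩ := rc_uniq h
    have hq : q = 0 := by
      apply rcL 1 one_ne_zero
      rw [Nat.cast_one]
      linear_combination h1
    have hp : pderiv 0 p = 0 := by
      have h2' : (2 : MvPolynomial (Fin 3) ℂ) * pderiv 0 p = 0 := by linear_combination -h2
      rcases mul_eq_zero.mp h2' with h3 | h3
      · exact absurd h3 two_ne_zero
      · exact h3
    exact ⟨hp, hq⟩
  -- membership in A for Φ-images with vanishing y-derivative
  have hmemA : ∀ p, pderiv 0 p = 0 → rcΦ p ∈ A := by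
    intro p hp
    rw [← hker]
    rw [hDΦ, hp, map_zero, zero_mul]
  -- the second-order analysis
  have hsecond : ∀ q, pderiv 0 (X 1 ^ 2 * q + 2 * rcU * pderiv 0 q) = 0 → pderiv 0 q = 0 := by
    intro q h
    apply rcL 3 (by norm_num)
    have hX1 : pderiv 0 (X 1 ^ 2 : MvPolynomial (Fin 3) ℂ) = 0 := by
      rw [pderiv_pow, pderiv_X_of_ne (by decide)]; ring
    rw [map_add, pderiv_mul, pderiv_mul, pderiv_mul, hX1, rc_pderiv_U] at h
    have h2 : pderiv 0 (2 : MvPolynomial (Fin 3) ℂ) = 0 := by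
      rw [show (2 : MvPolynomial (Fin 3) ℂ) = C 2 from by rw [map_ofNat], pderiv_C]
    rw [h2] at h
    push_cast
    linear_combination h
  constructor
  · -- plinth ideal
    ext w
    simp only [Set.mem_setOf_eq]
    constructor
    · rintro ⟨hw0, b, hb⟩
      obtain ⟨p, q, rfl⟩ := rc_repr b
      rw [hDform] at hb
      rw [← hb] at hw0
      obtain ⟨hP, hQ⟩ := hker0 _ _ hw0
      have hq : pderiv 0 q = 0 := hsecond q hP
      refine ⟨rcΦ q, hmemA q hq, ?_⟩
      rw [← hb, hq, mul_zero, add_zero, hQ, map_zero, zero_mul, add_zero, map_mul,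
        map_pow, ← hxΦ]
    · rintro ⟨a, ha, rfl⟩
      have hmem : x ^ 2 * a ∈ A := mul_mem (pow_mem hxA 2) ha
      refine ⟨(hker _).mpr hmem, a * z, ?_⟩
      rw [D.leibniz, (hker a).mpr ha, hDz]
      simp only [smul_eq_mul]
      ring
  · -- first degree module
    intro b
    constructor
    · intro h
      obtain ⟨p, q, rfl⟩ := rc_repr b
      rw [hDform] at h
      obtain ⟨hP, hQ⟩ := hker0 _ _ h
      have hq : pderiv 0 q = 0 := hsecond q hP
      have hp : pderiv 0 p = 0 := by
        have h2' : (2 : MvPolynomial (Fin 3) ℂ) * pderiv 0 p = 0 := by linear_combination -hQ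
        rcases mul_eq_zero.mp h2' with h3 | h3
        · exact absurd h3 two_ne_zero
        · exact h3
      exact ⟨rcΦ p, hmemA p hp, rcΦ q, hmemA q hq, by rw [hzΦ]⟩
    · rintro ⟨a0, ha0, a1, ha1, rfl⟩
      have h1 : D (a0 + a1 * z) = a1 * x ^ 2 := by
        rw [map_add, (hker a0).mpr ha0, zero_add, D.leibniz, (hker a1).mpr ha1, hDz]
        simp only [smul_eq_mul]
        ring
      rw [h1]
      exact (hker _).mpr (mul_mem ha1 (pow_mem hxA 2))
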